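/- Let R be a commutative ring of characteristic zero that is not submaximal. Then for every prime number q there exists a maximal ideal M of R such that the characteristic of R/M equals q. In particular R has infinitely many maximal ideals. -/

import Mathlib

/-!
If a prime `q` is not a unit of `R`, a maximal ideal containing `q` has residue characteristic
`q`. So it suffices to show that `R` is submaximal once some prime `q` is invertible in `R`.
Map `R` to a field `K` of characteristic zero (the fraction field of `R/P` for a prime `P`
avoiding the nonzero integers). Inside `K` there is a subring `V` with `1/q ∉ V` but
`V[1/q] = K`: take a transcendence basis `B` of `K` over `ℤ`, localize `ℤ[B]` at the prime `(q)`
and take the integral closure of the result in `K`. Every nonzero element of `ℤ[B]` is `q^k` times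
an element prime to `q` and `K` is algebraic over `ℤ[B]`, so every `x` has `q^k x ∈ V`; and `1/q`
is not integral over the localization, in which `q` is not a unit. Pulling `V` back to `R` gives a
subring `S` with `1/q ∉ S` and `S[1/q] = R`, and by Zorn's lemma a subring maximal among those
containing `S` but not `1/q` is a maximal subring of `R`.
-/

/-- A ring is submaximal if it has a maximal subring. -/
def Submaximal (R : Type*) [CommRing R] : Prop :=
  ∃ S : Subring R, S ≠ ⊤ ∧ ∀ T : Subring R, S < T → T = ⊤

section FractionSubalgebra

variable {A : Type*} (K : Type*) [CommRing A] [Field K] [Algebra A K]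

def fractionSubalgebra (S : Submonoid A) : Subalgebra A K where
  carrier := {x | ∃ a, ∃ s ∈ S, x * algebraMap A K s = algebraMap A K a}
  add_mem' := by
    rintro x y ⟨a, s, hs, hx⟩ ⟨b, t, ht, hy⟩
    refine ⟨a * t + b * s, s * t, S.mul_mem hs ht, ?_⟩
    simp only [map_mul, map_add]
    linear_combination algebraMap A K t * hx + algebraMap A K s * hy
  mul_mem' := by
    rintro x y ⟨a, s, hs, hx⟩ ⟨b, t, ht, hy⟩
    refine ⟨a * b, s * t, S.mul_mem hs ht, ?_⟩
    simp only [map_mul]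
    linear_combination y * algebraMap A K t * hx + algebraMap A K a * hy
  algebraMap_mem' a := ⟨a, 1, S.one_mem, by simp⟩

variable {K}

theorem inv_algebraMap_mem_fractionSubalgebra {S : Submonoid A} {s : A} (hs : s ∈ S) :
    (algebraMap A K s)⁻¹ ∈ fractionSubalgebra K S := by
  rcases eq_or_ne (algebraMap A K s) 0 with h | h
  · simp [h]
  · exact ⟨1, s, hs, by simp [h]⟩

theorem inv_algebraMap_notMem_fractionSubalgebra (hinj : Function.Injective (algebraMap A K))
    {P : Ideal A} [P.IsPrime] {a : A} (ha : a ∈ P) (ha₀ : a ≠ 0) :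
    (algebraMap A K a)⁻¹ ∉ fractionSubalgebra K P.primeCompl := by
  rintro ⟨b, s, hs, hx⟩
  have ha' : algebraMap A K a ≠ 0 := (map_ne_zero_iff _ hinj).mpr ha₀
  have hs_eq : s = a * b := hinj (by rw [map_mul, ← hx]; field_simp)
  exact hs (hs_eq ▸ P.mul_mem_right b ha)

end FractionSubalgebra

theorem Subalgebra.inv_mem_of_isIntegral_inv {R K : Type*} [CommRing R] [Field K] [Algebra R K]
    (V : Subalgebra R K) {y : K} (hy : y ∈ V) (hint : IsIntegral V y⁻¹) : y⁻¹ ∈ V := by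
  rcases eq_or_ne y 0 with rfl | hy₀
  · simp
  let C := integralClosure V K
  have hloc : IsLocalHom (algebraMap V C) :=
    (algebraMap_isIntegral_iff.mpr inferInstance).isLocalHom
      (fun a b hab => Subtype.ext (congrArg (fun c : C => (c : K)) hab))
  have hunit : IsUnit (algebraMap V C ⟨y, hy⟩) :=
    .of_mul_eq_one ⟨y⁻¹, hint⟩ (Subtype.ext (mul_inv_cancel₀ hy₀))
  obtain ⟨z, hz⟩ := (isUnit_of_map_unit _ _ hunit).exists_right_inv
  have hz_eq : (z : K) = y⁻¹ := eq_inv_of_mul_eq_one_right (congrArg Subtype.val hz)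
  exact hz_eq ▸ z.2

theorem exists_subring_inv_notMem_and_pow_mul_mem {A K : Type*} [CommRing A] [Field K]
    [Algebra A K] [Algebra.IsAlgebraic A K] (hinj : Function.Injective (algebraMap A K))
    {p : A} (hp : Prime p) (hfin : ∀ a ≠ 0, FiniteMultiplicity p a) :
    ∃ V : Subring K, (algebraMap A K p)⁻¹ ∉ V ∧
      ∀ x : K, ∃ k : ℕ, algebraMap A K p ^ k * x ∈ V := by
  have : (Ideal.span {p}).IsPrime := (Ideal.span_singleton_prime hp.ne_zero).mpr hp
  set V' := fractionSubalgebra K (Ideal.span {p}).primeCompl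
  refine ⟨(integralClosure V' K).toSubring, fun hmem => ?_, fun x => ?_⟩
  · exact inv_algebraMap_notMem_fractionSubalgebra hinj (Ideal.mem_span_singleton_self p)
      hp.ne_zero (V'.inv_mem_of_isIntegral_inv (V'.algebraMap_mem p) hmem)
  · obtain ⟨a, ha, hint⟩ := (Algebra.IsAlgebraic.isAlgebraic (R := A) x).exists_integral_multiple
    obtain ⟨a₀, hfac, hndvd⟩ := (hfin a ha).exists_eq_pow_mul_and_not_dvd
    generalize multiplicity p a = k at hfac
    have ha₀ : algebraMap A K a₀ ≠ 0 :=
      (map_ne_zero_iff _ hinj).mpr (right_ne_zero_of_mul (hfac ▸ ha))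
    have hinv : IsIntegral V' (algebraMap A K a₀)⁻¹ :=
      isIntegral_algebraMap (x := (⟨_, inv_algebraMap_mem_fractionSubalgebra
        (fun h => hndvd (Ideal.mem_span_singleton.mp h))⟩ : V'))
    refine ⟨k, ?_⟩
    have : algebraMap A K p ^ k * x = (algebraMap A K a₀)⁻¹ * (a • x) := by
      rw [Algebra.smul_def, hfac, map_mul, map_pow]
      field_simp
    rw [this]
    exact (integralClosure V' K).mul_mem hinv hint.tower_top

theorem MvPolynomial.finiteMultiplicity_C {R σ : Type*} [CommSemiring R] {r : R}
    {φ : MvPolynomial σ R} (m : σ →₀ ℕ) (h : FiniteMultiplicity r (φ.coeff m)) :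
    FiniteMultiplicity (C r) φ := by
  obtain ⟨n, hn⟩ := h
  exact ⟨n, fun hdvd => hn ((C_dvd_iff_dvd_coeff _ _).mp (by rwa [map_pow]) m)⟩

theorem exists_subring_inv_natCast_notMem_and_pow_mul_mem {K : Type*} [Field K] [CharZero K]
    {q : ℕ} (hq : q.Prime) :
    ∃ V : Subring K, (q : K)⁻¹ ∉ V ∧ ∀ x : K, ∃ k : ℕ, (q : K) ^ k * x ∈ V := by
  obtain ⟨B, hB⟩ := exists_isTranscendenceBasis ℤ K
  let : Algebra (MvPolynomial B ℤ) K := (MvPolynomial.aeval ((↑) : B → K)).toAlgebra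
  have : Algebra.IsAlgebraic (MvPolynomial B ℤ) K :=
    have := hB.isAlgebraic
    .of_ringHom_of_comp_eq hB.1.aevalEquiv.toRingHom (RingHom.id K)
      hB.1.aevalEquiv.surjective Function.injective_id rfl
  have hprime : Prime (MvPolynomial.C (q : ℤ) : MvPolynomial B ℤ) :=
    (MvPolynomial.prime_C_iff B).mpr (Nat.prime_iff_prime_int.mp hq)
  have hfin (φ : MvPolynomial B ℤ) (hφ : φ ≠ 0) : FiniteMultiplicity (MvPolynomial.C (q : ℤ)) φ :=
    have ⟨m, hm⟩ := MvPolynomial.ne_zero_iff.mp hφ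
    MvPolynomial.finiteMultiplicity_C m
      (Int.finiteMultiplicity_iff.mpr ⟨by simpa using hq.ne_one, hm⟩)
  have hq : algebraMap (MvPolynomial B ℤ) K (MvPolynomial.C (q : ℤ)) = q := by
    simp [RingHom.algebraMap_toAlgebra]
  simpa only [hq] using exists_subring_inv_notMem_and_pow_mul_mem hB.1 hprime hfin

theorem submaximal_of_forall_le_of_mem_eq_top {R : Type*} [CommRing R] (S : Subring R) {x : R}
    (hx : x ∉ S) (h : ∀ U : Subring R, S ≤ U → x ∈ U → U = ⊤) : Submaximal R := by
  have hub : ∀ c ⊆ {U : Subring R | S ≤ U ∧ x ∉ U}, IsChain (· ≤ ·) c →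
      ∀ U ∈ c, ∃ ub ∈ {U : Subring R | S ≤ U ∧ x ∉ U}, ∀ V ∈ c, V ≤ ub := by
    refine fun c hc hchain U hU => ⟨sSup c, ⟨(hc hU).1.trans (le_sSup hU), fun hmem => ?_⟩,
      fun V hV => le_sSup hV⟩
    obtain ⟨V, hV, hxV⟩ := (Subring.mem_sSup_of_directedOn ⟨U, hU⟩ hchain.directedOn).mp hmem
    exact (hc hV).2 hxV
  obtain ⟨W, -, ⟨hSW, hxW⟩, hWmax⟩ := zorn_le_nonempty₀ _ hub S ⟨le_rfl, hx⟩
  refine ⟨W, fun hW => hxW (hW ▸ Subring.mem_top x), fun T hWT => ?_⟩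
  by_contra hT
  exact hWT.not_ge (hWmax ⟨hSW.trans hWT.le, fun hxT => hT (h T (hSW.trans hWT.le) hxT)⟩ hWT.le)

theorem submaximal_of_ringHom_of_isUnit_natCast {R K : Type*} [CommRing R] [Field K] [CharZero K]
    (f : R →+* K) {q : ℕ} (hq : q.Prime) (hu : IsUnit (q : R)) : Submaximal R := by
  obtain ⟨V, hV, hpow⟩ := exists_subring_inv_natCast_notMem_and_pow_mul_mem (K := K) hq
  obtain ⟨u, hu⟩ := hu.exists_right_inv
  have hfu : f u = (q : K)⁻¹ :=
    eq_inv_of_mul_eq_one_right (by rw [← map_natCast f, ← map_mul, hu, map_one])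
  refine submaximal_of_forall_le_of_mem_eq_top (V.comap f) (x := u) (by simpa [hfu] using hV)
    fun U hVU huU => eq_top_iff.mpr fun r _ => ?_
  obtain ⟨k, hk⟩ := hpow (f r)
  have hqr : (q : R) ^ k * r ∈ U := hVU (by simpa using hk)
  have : r = u ^ k * ((q : R) ^ k * r) := by
    rw [← mul_assoc, ← mul_pow, mul_comm u, hu, one_pow, one_mul]
  exact this ▸ U.mul_mem (U.pow_mem huU k) hqr

theorem exists_isPrime_charZero_quotient (R : Type*) [CommRing R] [CharZero R] :
    ∃ P : Ideal R, P.IsPrime ∧ CharZero (R ⧸ P) := by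
  have hdisj : Disjoint ((⊥ : Ideal R) : Set R) ((nonZeroDivisors ℕ).map (Nat.castRingHom R)) := by
    refine Set.disjoint_left.mpr ?_
    rintro _ h ⟨n, hn, rfl⟩
    exact nonZeroDivisors.ne_zero hn (by simpa using h)
  obtain ⟨P, hP, -, hPdisj⟩ := Ideal.exists_le_prime_disjoint _ _ hdisj
  refine ⟨P, hP, charZero_of_inj_zero fun n hn => ?_⟩
  by_contra hn₀
  have hnP : (n : R) ∈ P := by rwa [← Ideal.Quotient.eq_zero_iff_mem, map_natCast]
  exact Set.disjoint_left.mp hPdisj hnP ⟨n, mem_nonZeroDivisors_of_ne_zero hn₀, rfl⟩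

theorem submaximal_of_isUnit_natCast {R : Type*} [CommRing R] [CharZero R] {q : ℕ} (hq : q.Prime)
    (hu : IsUnit (q : R)) : Submaximal R := by
  obtain ⟨P, hP, hchar⟩ := exists_isPrime_charZero_quotient R
  exact submaximal_of_ringHom_of_isUnit_natCast
    ((algebraMap (R ⧸ P) (FractionRing (R ⧸ P))).comp (Ideal.Quotient.mk P)) hq hu

theorem exists_isMaximal_ringChar_eq {R : Type*} [CommRing R] {q : ℕ} (hq : q.Prime)
    (hu : ¬IsUnit (q : R)) : ∃ M : Ideal R, M.IsMaximal ∧ ringChar (R ⧸ M) = q := by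
  obtain ⟨M, hM, hqM⟩ := Ideal.exists_le_maximal (Ideal.span {(q : R)})
    (by rwa [Ne, Ideal.span_singleton_eq_top])
  have hdvd : ringChar (R ⧸ M) ∣ q := ringChar.dvd <| by
    rw [← map_natCast (Ideal.Quotient.mk M), Ideal.Quotient.eq_zero_iff_mem]
    exact hqM (Ideal.mem_span_singleton_self _)
  exact ⟨M, hM, (hq.eq_one_or_self_of_dvd _ hdvd).resolve_left CharP.ringChar_ne_one⟩

theorem stmt5 {R : Type*} [CommRing R] [CharZero R] (h : ¬ Submaximal R) :
    (∀ q : ℕ, q.Prime → ∃ M : Ideal R, M.IsMaximal ∧ ringChar (R ⧸ M) = q) ∧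
      {M : Ideal R | M.IsMaximal}.Infinite := by
  have hchar (q : ℕ) (hq : q.Prime) : ∃ M : Ideal R, M.IsMaximal ∧ ringChar (R ⧸ M) = q :=
    exists_isMaximal_ringChar_eq hq fun hu => h (submaximal_of_isUnit_natCast hq hu)
  refine ⟨hchar, Set.Infinite.of_image (fun M => ringChar (R ⧸ M))
    (Nat.infinite_setOfPred_prime.mono fun q hq => ?_)⟩
  obtain ⟨M, hM, hMq⟩ := hchar q hq
  exact ⟨M, hM, hMq⟩
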